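/- Let (X, G, Φ) be a dynamical system, 𝒰 ∈ Part(X) a finite clopen partition of X, and A a finite subset of G. Then for any u ∈ 𝒪(𝒰), any P_A ∈ ℒ_A(𝒪(𝒰)), and any point x ∈ ∩_{g∈G} Φ_{g⁻¹}(π_g(u)), one has N(u, C(P_A) ∩ 𝒪(𝒰)) = N(x, U), where U = ∩_{g∈A} Φ_{g⁻¹}(P_A(g)). -/

import Mathlib

open Set

universe u

/-! ### Dynamical systems: actions of a countable discrete group by homeomorphisms -/

/-- An action of a group `G` on a topological space `X`: each `act g` is a homeomorphism
(continuity of the inverse follows from `act g⁻¹`). -/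
structure DynAction (G X : Type u) [Group G] [TopologicalSpace X] where
  act : G → X → X
  continuous_act : ∀ g : G, Continuous (act g)
  act_one : ∀ x : X, act 1 x = x
  act_mul : ∀ (g g' : G) (x : X), act (g * g') x = act g (act g' x)

section Covers

variable {G X : Type u} [Group G] [TopologicalSpace X]

/-- A finite open cover of `X`. -/
def IsFOC (𝒰 : Finset (Set X)) : Prop :=
  (∀ U ∈ 𝒰, IsOpen U) ∧ ⋃₀ (𝒰 : Set (Set X)) = Set.univ

/-- A finite partition of `X` into nonempty clopen sets. -/
def IsClopenPartition (𝒰 : Finset (Set X)) : Prop :=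
  (∀ U ∈ 𝒰, IsClopen U ∧ U.Nonempty) ∧ ⋃₀ (𝒰 : Set (Set X)) = Set.univ ∧
    ∀ U ∈ 𝒰, ∀ V ∈ 𝒰, U ≠ V → U ∩ V = ∅

/-- `𝒱` refines `𝒰`: every member of `𝒱` is contained in a member of `𝒰`. -/
def Refines (𝒱 𝒰 : Finset (Set X)) : Prop :=
  ∀ V ∈ 𝒱, ∃ U ∈ 𝒰, V ⊆ U

/-- `{U g}` is a pattern of the `(S,𝒰)`-pseudo-orbit `{x g}`:
all `U g` belong to `𝒰`, and `x (s*g) ∈ U (s*g)` and `Φ_s (x g) ∈ U (s*g)`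
for all `g ∈ G`, `s ∈ S`. -/
def IsPseudoOrbitPattern (Φ : DynAction G X) (S : Set G) (𝒰 : Finset (Set X))
    (x : G → X) (U : G → Set X) : Prop :=
  (∀ g : G, U g ∈ 𝒰) ∧
    ∀ g : G, ∀ s ∈ S, x (s * g) ∈ U (s * g) ∧ Φ.act s (x g) ∈ U (s * g)

/-- `{x g}` is an `(S,𝒰)`-pseudo-orbit. -/
def IsPseudoOrbit (Φ : DynAction G X) (S : Set G) (𝒰 : Finset (Set X)) (x : G → X) : Prop :=
  ∃ U : G → Set X, IsPseudoOrbitPattern Φ S 𝒰 x U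

/-- `z` `𝒰`-shadows the family `{x g}`. -/
def Shadows (Φ : DynAction G X) (𝒰 : Finset (Set X)) (z : X) (x : G → X) : Prop :=
  ∀ g : G, ∃ U ∈ 𝒰, Φ.act g z ∈ U ∧ x g ∈ U

/-- The (topological) `S`-shadowing property. -/
def ShadowingProperty (Φ : DynAction G X) (S : Set G) : Prop :=
  ∀ 𝒰 : Finset (Set X), IsFOC 𝒰 → ∃ 𝒱 : Finset (Set X), IsFOC 𝒱 ∧
    ∀ x : G → X, IsPseudoOrbit Φ S 𝒱 x → ∃ z : X, Shadows Φ 𝒰 z x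

/-! ### Equivariant maps, factor maps, conjugacies -/

def IsEquivariant {Y : Type u} [TopologicalSpace Y]
    (ΦX : DynAction G X) (ΦY : DynAction G Y) (f : X → Y) : Prop :=
  ∀ (g : G) (x : X), f (ΦX.act g x) = ΦY.act g (f x)

/-- `f` is a factor map from `(X,G,ΦX)` onto `(Y,G,ΦY)`. -/
def IsFactorMap {Y : Type u} [TopologicalSpace Y]
    (ΦX : DynAction G X) (ΦY : DynAction G Y) (f : X → Y) : Prop :=
  Continuous f ∧ Function.Surjective f ∧ IsEquivariant ΦX ΦY f

/-- `f` is a conjugacy (bijective factor map). -/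
def IsConjugacy {Y : Type u} [TopologicalSpace Y]
    (ΦX : DynAction G X) (ΦY : DynAction G Y) (f : X → Y) : Prop :=
  Continuous f ∧ Function.Bijective f ∧ IsEquivariant ΦX ΦY f

end Covers

/-! ### Shifts, subshifts, shifts of finite type -/

/-- The shift action on `A^G`: `(σ_g x) h = x (h * g)`. -/
def shift (G A : Type u) [Group G] (g : G) (x : G → A) : G → A :=
  fun h => x (h * g)

/-- The full shift `A^G` (product topology) as a dynamical system. -/
def shiftDyn (G A : Type u) [Group G] [TopologicalSpace A] : DynAction G (G → A) where
  act := shift G A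
  continuous_act g := continuous_pi fun h => continuous_apply (h * g)
  act_one x := by funext h; simp [shift]
  act_mul g g' x := by funext h; simp [shift, mul_assoc]

/-- A subshift: a closed shift-invariant subset of the full shift `A^G`. -/
def IsSubshift {G A : Type u} [Group G] [TopologicalSpace A] (Y : Set (G → A)) : Prop :=
  IsClosed Y ∧ ∀ g : G, ∀ x ∈ Y, shift G A g x ∈ Y

/-- The cylinder set determined by the values of `P` on the finite shape `B`. -/
def cylinder {G A : Type u} (B : Finset G) (P : G → A) : Set (G → A) :=
  {y | ∀ b ∈ B, y b = P b}

/-- The language of `Y ⊆ A^G` over the finite shape `B` (a pattern is recorded by any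
function `G → A` with the prescribed values on `B`). -/
def language {G A : Type u} (B : Finset G) (Y : Set (G → A)) : Set (G → A) :=
  {P | (cylinder B P ∩ Y).Nonempty}

/-- `Y` is a shift of finite type over the finite shape `B`: it is cut out by a family of
forbidden patterns on `B`. -/
def IsSFTOver {G A : Type u} [Group G] (B : Finset G) (Y : Set (G → A)) : Prop :=
  ∃ ℱ : Set (G → A), Y = {x | ∀ g : G, ∀ P ∈ ℱ, shift G A g x ∉ cylinder B P}

/-- The shift action restricted to a subshift. -/
def subshiftDyn {G A : Type u} [Group G] [TopologicalSpace A] (Y : Set (G → A))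
    (hY : IsSubshift Y) : DynAction G ↥Y where
  act g x := ⟨shift G A g x.1, hY.2 g x.1 x.2⟩
  continuous_act g := Continuous.subtype_mk
    ((continuous_pi fun h => continuous_apply (h * g)).comp continuous_subtype_val) _
  act_one x := by apply Subtype.ext; funext h; simp [shift]
  act_mul g g' x := by apply Subtype.ext; funext h; simp [shift, mul_assoc]

/-! ### Hitting time sets and mixing-type properties -/

section Mixing

variable {G X : Type u} [Group G] [TopologicalSpace X]

/-- The hitting time set `N(U,V) = {g ≠ e : U ∩ Φ_{g⁻¹}(V) ≠ ∅}`. -/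
def hittingTimes (Φ : DynAction G X) (U V : Set X) : Set G :=
  {g : G | g ≠ 1 ∧ (U ∩ Φ.act g⁻¹ '' V).Nonempty}

/-- Topological mixing: `G \ N(U,V)` is finite for all nonempty open `U, V`. -/
def IsMixing (Φ : DynAction G X) : Prop :=
  ∀ U V : Set X, IsOpen U → IsOpen V → U.Nonempty → V.Nonempty →
    ((hittingTimes Φ U V)ᶜ : Set G).Finite

/-- Minimality: there is no nonempty proper closed invariant subset. -/
def IsMinimal (Φ : DynAction G X) : Prop :=
  ∀ K : Set X, IsClosed K → (∀ g : G, ∀ x ∈ K, Φ.act g x ∈ K) →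
    K = ∅ ∨ K = Set.univ

end Mixing

/-! ### Orbit spaces and pseudo-orbit spaces of finite covers -/

/-- An element of the finite cover `𝒰`, regarded as a letter of a (discrete) finite
alphabet. -/
structure CoverElt {X : Type u} (𝒰 : Finset (Set X)) where
  val : Set X
  mem : val ∈ 𝒰

instance {X : Type u} (𝒰 : Finset (Set X)) : TopologicalSpace (CoverElt 𝒰) := ⊥
instance {X : Type u} (𝒰 : Finset (Set X)) : DiscreteTopology (CoverElt 𝒰) := ⟨rfl⟩
instance {X : Type u} (𝒰 : Finset (Set X)) : Finite (CoverElt 𝒰) :=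
  Finite.of_injective (fun e => (⟨e.val, e.mem⟩ : {U : Set X // U ∈ 𝒰}))
    (fun a b hab => by cases a; cases b; simpa using hab)

/-- The `𝒰`-orbit space `𝒪(𝒰)`: the closure in the full shift `𝒰^G` of the set of
orbit patterns. -/
def orbitSpace {G X : Type u} [Group G] [TopologicalSpace X]
    (Φ : DynAction G X) (𝒰 : Finset (Set X)) : Set (G → CoverElt 𝒰) :=
  closure {u : G → CoverElt 𝒰 | (⋂ g : G, Φ.act g⁻¹ '' (u g).val).Nonempty}

/-- The `(S,𝒰)`-pseudo-orbit space `𝒫𝒪_S(𝒰)`: all patterns of `(S,𝒰)`-pseudo-orbits. -/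
def psOrbitSpace {G X : Type u} [Group G] [TopologicalSpace X]
    (Φ : DynAction G X) (S : Set G) (𝒰 : Finset (Set X)) : Set (G → CoverElt 𝒰) :=
  {u : G → CoverElt 𝒰 | ∃ x : G → X, IsPseudoOrbitPattern Φ S 𝒰 x (fun g => (u g).val)}

/-
Since `𝒰` is a partition and `x` follows the itinerary `u`, the letter `u (b * g)` is the
unique member of `𝒰` containing `Φ_{b g} x`. Hence `σ_g u` lies in the cylinder of `P` over
`B` exactly when `Φ_g x` lies in `⋂_{b ∈ B} Φ_{b⁻¹}(P b)`, and `σ_g u` stays in `𝒪(𝒰)`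
because the orbit space is shift invariant.
-/

namespace DynAction

variable {G X : Type u} [Group G] [TopologicalSpace X] (Φ : DynAction G X)

lemma mem_act_inv_image {g : G} {S : Set X} {x : X} :
    x ∈ Φ.act g⁻¹ '' S ↔ Φ.act g x ∈ S := by
  constructor
  · rintro ⟨y, hy, rfl⟩
    rwa [← Φ.act_mul, mul_inv_cancel, Φ.act_one]
  · intro h
    exact ⟨Φ.act g x, h, by rw [← Φ.act_mul, inv_mul_cancel, Φ.act_one]⟩

lemma mem_iInter_act_inv_image {S : G → Set X} {x : X} :
    x ∈ ⋂ g, Φ.act g⁻¹ '' S g ↔ ∀ g, Φ.act g x ∈ S g := by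
  simp only [mem_iInter, Φ.mem_act_inv_image]

lemma mem_biInter_act_inv_image {s : Finset G} {S : G → Set X} {x : X} :
    x ∈ ⋂ g ∈ s, Φ.act g⁻¹ '' S g ↔ ∀ g ∈ s, Φ.act g x ∈ S g := by
  simp only [mem_iInter₂, Φ.mem_act_inv_image]

end DynAction

lemma mem_hittingTimes_singleton {G X : Type u} [Group G] [TopologicalSpace X]
    (Φ : DynAction G X) {x : X} {V : Set X} {g : G} :
    g ∈ hittingTimes Φ {x} V ↔ g ≠ 1 ∧ Φ.act g x ∈ V := by
  rw [hittingTimes, mem_ofPred_eq, singleton_inter_nonempty, Φ.mem_act_inv_image]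

lemma shiftDyn_act (G A : Type u) [Group G] [TopologicalSpace A] :
    (shiftDyn G A).act = shift G A :=
  rfl

lemma CoverElt.eq_iff_mem_val {X : Type u} {𝒰 : Finset (Set X)}
    (h𝒰 : ∀ U ∈ 𝒰, ∀ V ∈ 𝒰, U ≠ V → U ∩ V = ∅) {a b : CoverElt 𝒰} {y : X}
    (hy : y ∈ a.val) : a = b ↔ y ∈ b.val := by
  refine ⟨fun hab => hab ▸ hy, fun hyb => ?_⟩
  obtain ⟨U, hU⟩ := a
  obtain ⟨V, hV⟩ := b
  by_contra hne
  have hUV : U ∩ V = ∅ := h𝒰 U hU V hV fun h => hne (by subst h; rfl)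
  exact (hUV ▸ mem_inter hy hyb : y ∈ (∅ : Set X))

lemma shift_mem_orbitSpace {G X : Type u} [Group G] [TopologicalSpace X]
    (Φ : DynAction G X) (𝒰 : Finset (Set X)) (g : G) {u : G → CoverElt 𝒰}
    (hu : u ∈ orbitSpace Φ 𝒰) : shift G (CoverElt 𝒰) g u ∈ orbitSpace Φ 𝒰 := by
  refine map_mem_closure (continuous_pi fun h => continuous_apply (h * g)) hu ?_
  rintro v ⟨z, hz⟩
  refine ⟨Φ.act g z, Φ.mem_iInter_act_inv_image.2 fun h => ?_⟩
  rw [← Φ.act_mul]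
  exact Φ.mem_iInter_act_inv_image.1 hz (h * g)

theorem hittingTimes_point_cylinder_orbitSpace_general
    {G X : Type} [Group G] [TopologicalSpace X]
    (Φ : DynAction G X) (𝒰 : Finset (Set X)) (h𝒰 : IsClopenPartition 𝒰) (B : Finset G)
    (u : G → CoverElt 𝒰) (hu : u ∈ orbitSpace Φ 𝒰)
    (P : G → CoverElt 𝒰)
    (x : X) (hx : x ∈ ⋂ g : G, Φ.act g⁻¹ '' (u g).val) :
    hittingTimes (shiftDyn G (CoverElt 𝒰)) {u} (cylinder B P ∩ orbitSpace Φ 𝒰)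
      = hittingTimes Φ {x} (⋂ g ∈ B, Φ.act g⁻¹ '' (P g).val) := by
  rw [Φ.mem_iInter_act_inv_image] at hx
  ext g
  rw [mem_hittingTimes_singleton, mem_hittingTimes_singleton, shiftDyn_act, mem_inter_iff,
    and_iff_left (shift_mem_orbitSpace Φ 𝒰 g hu), Φ.mem_biInter_act_inv_image]
  refine and_congr_right fun _ => forall₂_congr fun b _ => ?_
  rw [← Φ.act_mul]
  exact CoverElt.eq_iff_mem_val h𝒰.2.2 (hx (b * g))

/-- **Lemma 6.5.** For a clopen partition `𝒰`, hitting times from a point `u` of the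
orbit space to a cylinder agree with hitting times from an encoded point `x` to the set
determined by the pattern. -/
theorem hittingTimes_point_cylinder_orbitSpace
    {G X : Type} [Group G] [Countable G] [TopologicalSpace X]
    [CompactSpace X] [T2Space X]
    (Φ : DynAction G X) (𝒰 : Finset (Set X)) (h𝒰 : IsClopenPartition 𝒰) (B : Finset G)
    (u : G → CoverElt 𝒰) (hu : u ∈ orbitSpace Φ 𝒰)
    (P : G → CoverElt 𝒰) (hP : P ∈ language B (orbitSpace Φ 𝒰))
    (x : X) (hx : x ∈ ⋂ g : G, Φ.act g⁻¹ '' (u g).val) :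
    hittingTimes (shiftDyn G (CoverElt 𝒰)) {u} (cylinder B P ∩ orbitSpace Φ 𝒰)
      = hittingTimes Φ {x} (⋂ g ∈ B, Φ.act g⁻¹ '' (P g).val) :=
  hittingTimes_point_cylinder_orbitSpace_general Φ 𝒰 h𝒰 B u hu P x hx
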